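/- arXiv:2605.07506 — 6 statements merged into one kernel-verified Lean document; each statement's English description precedes it below -/
import Mathlib

section
/- For any analytic self-map φ of the unit disk and any n ≥ 1 such that the composition-differentiation operator D_{φ,n} f = f^{(n)} ∘ φ is bounded on H²(𝔻), the operator D_{φ,n} is not posinormal; equivalently, the range of D_{φ,n} is not contained in the range of D_{φ,n}^*. -/
/-!
Both posinormality and `range T ⊆ range T*` force `ker T ⊆ ker T*`. For `n ≥ 1` the operator
`D_{φ,n}` kills the constant `1`, yet `⟪T* 1, zⁿ⟫ = (D_{φ,n} zⁿ)(0) = n! ≠ 0`, so `T* 1 ≠ 0`.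
-/

open Complex Metric
open scoped InnerProductSpace

noncomputable section

/-- The Hardy space `H²(𝔻)`, modeled as the Hilbert space of square-summable
Taylor coefficient sequences. -/
abbrev H2 : Type := lp (fun _ : ℕ => ℂ) 2

/-- The analytic function on the unit disk represented by an element of `H²`. -/
noncomputable def H2.toFun (f : H2) (z : ℂ) : ℂ := ∑' k, f k * z ^ k

/-- `T` is posinormal if `T T* = T* P T` for some positive operator `P`. -/
def Posinormal {H : Type*} [NormedAddCommGroup H] [InnerProductSpace ℂ H] [CompleteSpace H]
    (T : H →L[ℂ] H) : Prop :=
  ∃ P : H →L[ℂ] H, P.IsPositive ∧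
    T ∘L ContinuousLinearMap.adjoint T = ContinuousLinearMap.adjoint T ∘L P ∘L T

/-- `T` realizes the weighted composition-differentiation operator `D_{ψ,φ,n}` on `H²`. -/
def IsWCD (ψ φ : ℂ → ℂ) (n : ℕ) (T : H2 →L[ℂ] H2) : Prop :=
  ∀ f : H2, ∀ z ∈ ball (0 : ℂ) 1,
    H2.toFun (T f) z = ψ z * iteratedDeriv n (H2.toFun f) (φ z)

open ContinuousLinearMap

lemma H2.hasSum_toFun (g : H2) {z : ℂ} (hz : ‖z‖ < 1) :
    HasSum (fun k => g k * z ^ k) (g.toFun z) := by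
  refine (Summable.of_norm ?_).hasSum
  refine Summable.of_nonneg_of_le (fun k => norm_nonneg _) (fun k => ?_)
    ((summable_geometric_of_lt_one (norm_nonneg z) hz).mul_left ‖g‖)
  rw [norm_mul, norm_pow]
  exact mul_le_mul_of_nonneg_right (lp.norm_apply_le_norm two_ne_zero g k) (by positivity)

lemma H2.toFun_zero (g : H2) : g.toFun 0 = g 0 := by
  rw [H2.toFun, tsum_eq_single 0 fun k hk => by simp [zero_pow hk]]
  simp

lemma H2.toFun_single (k : ℕ) (c : ℂ) : H2.toFun (lp.single 2 k c) = fun z => c * z ^ k := by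
  funext z
  rw [H2.toFun, tsum_eq_single k fun j hj => by simp [hj], lp.single_apply_self]

lemma H2.eq_zero_of_toFun_eq_zero (g : H2) (h : ∀ z ∈ ball (0 : ℂ) 1, g.toFun z = 0) : g = 0 := by
  set p : FormalMultilinearSeries ℂ ℂ ℂ :=
    fun k => ContinuousMultilinearMap.mkPiRing ℂ (Fin k) (g k)
  have hr : 1 ≤ p.radius := by
    refine p.le_radius_of_bound ‖g‖ fun k => ?_
    rw [ContinuousMultilinearMap.norm_mkPiRing]
    simpa using lp.norm_apply_le_norm two_ne_zero g k
  have hp : HasFPowerSeriesOnBall g.toFun p 0 1 := by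
    refine ⟨hr, one_pos, fun {y} hy => ?_⟩
    rw [mem_eball_zero_iff, ← ofReal_norm, ENNReal.ofReal_lt_one] at hy
    simpa [p, mul_comm] using g.hasSum_toFun hy
  have hp0 : p = 0 := hp.hasFPowerSeriesAt.eq_zero_of_eventually
    (Filter.eventuallyEq_of_mem (ball_mem_nhds 0 one_pos) h)
  refine lp.ext (funext fun k => ?_)
  simpa [p] using congrArg (fun q => q k fun _ => (1 : ℂ)) hp0

section AdjointKernel

variable {H : Type*} [NormedAddCommGroup H] [InnerProductSpace ℂ H] [CompleteSpace H]
  {T : H →L[ℂ] H}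

lemma Posinormal.ker_le_ker_adjoint (hT : Posinormal T) :
    T.ker ≤ (adjoint T).ker := by
  obtain ⟨P, -, hP⟩ := hT
  intro x (hx : T x = 0)
  change adjoint T x = 0
  rw [← inner_self_eq_zero (𝕜 := ℂ), adjoint_inner_left]
  calc ⟪x, T (adjoint T x)⟫_ℂ = ⟪x, adjoint T (P (T x))⟫_ℂ := by
        rw [← comp_apply, hP]; rfl
    _ = 0 := by rw [adjoint_inner_right, hx, inner_zero_left]

lemma ContinuousLinearMap.ker_le_ker_adjoint_of_range_subset
    (h : Set.range T ⊆ Set.range (adjoint T)) : T.ker ≤ (adjoint T).ker := by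
  have hrange : T.range ≤ (adjoint T).range := fun x hx => h hx
  calc T.ker = (adjoint T).rangeᗮ := by rw [orthogonal_range, adjoint_adjoint]
    _ ≤ T.rangeᗮ := Submodule.orthogonal_le hrange
    _ = (adjoint T).ker := orthogonal_range T

end AdjointKernel

namespace IsWCD

variable {ψ φ : ℂ → ℂ} {n : ℕ} {T : H2 →L[ℂ] H2}

lemma apply_single_zero (hT : IsWCD ψ φ n T) (hn : 1 ≤ n) (c : ℂ) :
    T (lp.single 2 0 c) = 0 := by
  refine H2.eq_zero_of_toFun_eq_zero _ fun z hz => ?_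
  rw [hT _ z hz, H2.toFun_single]
  simp [iteratedDeriv_const, Nat.one_le_iff_ne_zero.mp hn]

lemma apply_single_self_zero (hT : IsWCD ψ φ n T) :
    T (lp.single 2 n 1) 0 = ψ 0 * n.factorial := by
  rw [← H2.toFun_zero, hT _ 0 (mem_ball_self one_pos), H2.toFun_single]
  simp [Nat.descFactorial_self]

lemma adjoint_single_zero_ne_zero (hT : IsWCD ψ φ n T) (hψ : ψ 0 ≠ 0) :
    adjoint T (lp.single 2 0 1) ≠ 0 := by
  intro h
  have := adjoint_inner_left T (lp.single 2 n 1) (lp.single 2 0 1)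
  rw [h, inner_zero_left, lp.inner_single_left, hT.apply_single_self_zero] at this
  simp [hψ, Nat.factorial_ne_zero] at this

end IsWCD

theorem stmt2_general (φ : ℂ → ℂ)
    (n : ℕ) (hn : 1 ≤ n)
    (T : H2 →L[ℂ] H2) (hT : IsWCD (fun _ => 1) φ n T) :
    ¬ Posinormal T ∧
      ¬ (Set.range T ⊆ Set.range (ContinuousLinearMap.adjoint T)) := by
  have hker : lp.single 2 0 1 ∈ T.ker := hT.apply_single_zero hn 1
  have hne := hT.adjoint_single_zero_ne_zero one_ne_zero
  exact ⟨fun h => hne (h.ker_le_ker_adjoint hker),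
    fun h => hne (ker_le_ker_adjoint_of_range_subset h hker)⟩

/-- The unweighted composition-differentiation operator `D_{φ,n}` is never posinormal;
equivalently, its range is not contained in the range of its adjoint. -/
theorem stmt2 (φ : ℂ → ℂ)
    (hφ : DifferentiableOn ℂ φ (ball (0 : ℂ) 1))
    (hφm : ∀ z ∈ ball (0 : ℂ) 1, φ z ∈ ball (0 : ℂ) 1)
    (n : ℕ) (hn : 1 ≤ n)
    (T : H2 →L[ℂ] H2) (hT : IsWCD (fun _ => 1) φ n T) :
    ¬ Posinormal T ∧
      ¬ (Set.range T ⊆ Set.range (ContinuousLinearMap.adjoint T)) :=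
  stmt2_general φ n hn T hT
end
end

section
/- A bounded linear operator T on a Hilbert space H is posinormal (i.e., there exists a positive operator P with T T^* = T^* P T) if and only if Range(T) ⊆ Range(T^*), if and only if T T^* ≤ λ² T^* T for some λ ≥ 0, if and only if there exists a bounded operator A on H with T = T^* A. -/
open Complex Metric
open scoped InnerProductSpace

noncomputable section

/-!
Everything follows from Douglas's lemma. If `T T* = T* P T` with `P ≥ 0`, then
`T T* ≤ ‖P‖ T* T`, i.e. `‖T* x‖ ≤ √‖P‖ ‖T x‖`. Such a majorization `‖S x‖ ≤ c ‖R x‖` gives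
`range S* ⊆ range R*`: the functional `R x ↦ ⟪u, S x⟫` is bounded on `range R`, so by
Hahn–Banach and Riesz it is `⟪v, ·⟫` for some `v`, and then `S* u = R* v`. Conversely
`range R ⊆ range S` lets one solve `R = S A` with `A` bounded, by the closed graph theorem
applied to `S` restricted to `(ker S)ᗮ`. Finally `T = T* A` gives `T T* = T* (A A*) T`.
-/

namespace ContinuousLinearMap

section NormedSpace

variable {𝕜 E F G : Type*} [NontriviallyNormedField 𝕜]
  [NormedAddCommGroup E] [NormedSpace 𝕜 E] [NormedAddCommGroup F] [NormedSpace 𝕜 F]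
  [NormedAddCommGroup G] [NormedSpace 𝕜 G]

theorem exists_lift_of_norm_le (S : E →L[𝕜] F) (R : E →L[𝕜] G) (c : ℝ)
    (h : ∀ x, ‖S x‖ ≤ c * ‖R x‖) :
    ∃ C : LinearMap.range (R : E →ₗ[𝕜] G) →L[𝕜] F, ∀ x, C ⟨R x, x, rfl⟩ = S x := by
  have hker : LinearMap.ker (R : E →ₗ[𝕜] G) ≤ LinearMap.ker (S : E →ₗ[𝕜] F) := fun x hx =>
    norm_le_zero_iff.mp (by simpa [show R x = 0 from hx] using h x)
  let C₀ := (LinearMap.ker (R : E →ₗ[𝕜] G)).liftQ (S : E →ₗ[𝕜] F) hker ∘ₗ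
    (R : E →ₗ[𝕜] G).quotKerEquivRange.symm.toLinearMap
  have hC₀ : ∀ x, C₀ ⟨R x, x, rfl⟩ = S x := fun x => by
    simp only [C₀, LinearMap.comp_apply, LinearEquiv.coe_coe]
    exact (congrArg _ ((R : E →ₗ[𝕜] G).quotKerEquivRange_symm_apply_image x _)).trans
      (Submodule.liftQ_apply _ _ _)
  refine ⟨C₀.mkContinuous c ?_, hC₀⟩
  rintro ⟨_, x, rfl⟩
  simpa [hC₀] using h x

variable [CompleteSpace E] [CompleteSpace G]

theorem exists_eq_comp_of_injective_of_range_subset (S : E →L[𝕜] F) (hS : Function.Injective S)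
    (R : G →L[𝕜] F) (h : Set.range R ⊆ Set.range S) : ∃ A : G →L[𝕜] E, R = S ∘L A := by
  let e := LinearEquiv.ofInjective (S : E →ₗ[𝕜] F) hS
  let A₀ : G →ₗ[𝕜] E :=
    e.symm.toLinearMap ∘ₗ (R : G →ₗ[𝕜] F).codRestrict _ fun x => h ⟨x, rfl⟩
  have hA₀ : ∀ x, S (A₀ x) = R x := fun x => congrArg Subtype.val (e.apply_symm_apply _)
  have hgraph : (A₀.graph : Set (G × E)) = {p | S p.2 = R p.1} := by
    ext ⟨x, y⟩
    simp only [SetLike.mem_coe, LinearMap.mem_graph_iff, Set.mem_ofPred_eq, ← hA₀ x]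
    exact hS.eq_iff.symm
  refine ⟨⟨A₀, A₀.continuous_of_isClosed_graph ?_⟩, ext fun x => (hA₀ x).symm⟩
  rw [hgraph]
  exact isClosed_eq (S.continuous.comp continuous_snd) (R.continuous.comp continuous_fst)

end NormedSpace

section InnerProductSpace

variable {𝕜 E F G : Type*} [RCLike 𝕜]
  [NormedAddCommGroup E] [InnerProductSpace 𝕜 E] [CompleteSpace E]
  [NormedAddCommGroup F] [NormedSpace 𝕜 F]
  [NormedAddCommGroup G] [NormedSpace 𝕜 G] [CompleteSpace G]

theorem exists_eq_comp_of_range_subset (S : E →L[𝕜] F) (R : G →L[𝕜] F)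
    (h : Set.range R ⊆ Set.range S) : ∃ A : G →L[𝕜] E, R = S ∘L A := by
  set K := LinearMap.ker (S : E →ₗ[𝕜] F)
  have : CompleteSpace K := S.isClosed_ker.completeSpace_coe
  have hinj : Function.Injective (S ∘L Kᗮ.subtypeL) := by
    refine (injective_iff_map_eq_zero _).mpr fun y hy => ?_
    have : (y : E) ∈ K ⊓ Kᗮ := ⟨hy, y.2⟩
    rw [K.inf_orthogonal_eq_bot, Submodule.mem_bot] at this
    exact Subtype.ext this
  have hrange : Set.range S ⊆ Set.range (S ∘L Kᗮ.subtypeL) := by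
    rintro _ ⟨y, rfl⟩
    refine ⟨⟨y - K.starProjection y, K.sub_starProjection_mem_orthogonal y⟩, ?_⟩
    simpa using LinearMap.mem_ker.mp (K.starProjection_apply_mem y)
  obtain ⟨A, hA⟩ := exists_eq_comp_of_injective_of_range_subset _ hinj R (h.trans hrange)
  exact ⟨Kᗮ.subtypeL ∘L A, hA⟩

end InnerProductSpace

section Adjoint

variable {𝕜 E F G : Type*} [RCLike 𝕜]
  [NormedAddCommGroup E] [InnerProductSpace 𝕜 E] [CompleteSpace E]
  [NormedAddCommGroup F] [InnerProductSpace 𝕜 F] [CompleteSpace F]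
  [NormedAddCommGroup G] [InnerProductSpace 𝕜 G] [CompleteSpace G]

theorem range_adjoint_subset_of_norm_le (S : E →L[𝕜] F) (R : E →L[𝕜] G) (c : ℝ)
    (h : ∀ x, ‖S x‖ ≤ c * ‖R x‖) : Set.range (adjoint S) ⊆ Set.range (adjoint R) := by
  obtain ⟨C, hC⟩ := exists_lift_of_norm_le S R c h
  rintro _ ⟨u, rfl⟩
  obtain ⟨φ, hφ, -⟩ := exists_extension_norm_eq _ (innerSL 𝕜 u ∘L C)
  refine ⟨(InnerProductSpace.toDual 𝕜 G).symm φ, ext_inner_right 𝕜 fun x => ?_⟩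
  rw [adjoint_inner_left, adjoint_inner_left, InnerProductSpace.toDual_symm_apply]
  simpa [hC] using hφ ⟨R x, x, rfl⟩

theorem norm_apply_le_of_adjoint_comp_le (S : E →L[𝕜] F) (R : E →L[𝕜] G) (l : ℝ)
    (h : adjoint S ∘L S ≤ ((l : 𝕜) ^ 2) • (adjoint R ∘L R)) (x : E) :
    ‖S x‖ ≤ |l| * ‖R x‖ := by
  have hsq : ‖S x‖ ^ 2 ≤ (|l| * ‖R x‖) ^ 2 := by
    rw [mul_pow, sq_abs, apply_norm_sq_eq_inner_adjoint_left, apply_norm_sq_eq_inner_adjoint_left]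
    simpa [inner_sub_left, inner_smul_left] using ((le_def _ _).mp h).re_inner_nonneg_left x
  exact (sq_le_sq₀ (norm_nonneg _) (by positivity)).mp hsq

theorem range_subset_range_adjoint_of_comp_adjoint_le {T : E →L[𝕜] E} {l : ℝ}
    (h : T ∘L adjoint T ≤ ((l : 𝕜) ^ 2) • (adjoint T ∘L T)) :
    Set.range T ⊆ Set.range (adjoint T) := by
  have hS : adjoint (adjoint T) ∘L adjoint T ≤ ((l : 𝕜) ^ 2) • (adjoint T ∘L T) := by
    rwa [adjoint_adjoint]
  have := range_adjoint_subset_of_norm_le _ _ _ (norm_apply_le_of_adjoint_comp_le _ T l hS)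
  rwa [adjoint_adjoint] at this

end Adjoint

end ContinuousLinearMap

section Posinormal

open ContinuousLinearMap

variable {H : Type*} [NormedAddCommGroup H] [InnerProductSpace ℂ H] [CompleteSpace H]
  {T : H →L[ℂ] H}

theorem Posinormal.exists_comp_adjoint_le (h : Posinormal T) :
    ∃ l : ℝ, 0 ≤ l ∧ T ∘L adjoint T ≤ ((l : ℂ) ^ 2) • (adjoint T ∘L T) := by
  obtain ⟨P, hP, hTP⟩ := h
  refine ⟨√‖P‖, Real.sqrt_nonneg _, ?_⟩
  have := CStarAlgebra.star_left_conjugate_le_norm_smul (a := T) hP.isSelfAdjoint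
  rw [hTP]
  convert this using 1
  · rw [star_eq_adjoint, mul_def, mul_def]
    rfl
  · rw [star_eq_adjoint, mul_def, ← Complex.ofReal_pow, Real.sq_sqrt (norm_nonneg _),
      Complex.coe_smul]

theorem posinormal_of_eq_adjoint_comp {A : H →L[ℂ] H} (hA : T = adjoint T ∘L A) :
    Posinormal T := by
  have hadj : adjoint T = adjoint A ∘L T := by
    conv_lhs => rw [hA]
    rw [adjoint_comp, adjoint_adjoint]
  refine ⟨A ∘L adjoint A, isPositive_self_comp_adjoint A, ?_⟩
  calc T ∘L adjoint T = (adjoint T ∘L A) ∘L (adjoint A ∘L T) := by rw [← hA, ← hadj]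
    _ = adjoint T ∘L (A ∘L adjoint A) ∘L T := rfl

end Posinormal

/-- Rhaly's characterizations of posinormality: `T` is posinormal iff
`Range(T) ⊆ Range(T*)`, iff `T T* ≤ λ² T* T` for some `λ ≥ 0`, iff `T = T* A`
for some bounded `A`. -/
theorem stmt3 {H : Type*} [NormedAddCommGroup H] [InnerProductSpace ℂ H] [CompleteSpace H]
    (T : H →L[ℂ] H) :
    (Posinormal T ↔ Set.range T ⊆ Set.range (ContinuousLinearMap.adjoint T)) ∧
    (Posinormal T ↔ ∃ l : ℝ, 0 ≤ l ∧
      ((((l : ℂ) ^ 2) • (ContinuousLinearMap.adjoint T ∘L T) -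
        T ∘L ContinuousLinearMap.adjoint T)).IsPositive) ∧
    (Posinormal T ↔ ∃ A : H →L[ℂ] H, T = ContinuousLinearMap.adjoint T ∘L A) := by
  have tfae : List.TFAE [Posinormal T,
      Set.range T ⊆ Set.range (ContinuousLinearMap.adjoint T),
      ∃ l : ℝ, 0 ≤ l ∧ T ∘L ContinuousLinearMap.adjoint T ≤
        ((l : ℂ) ^ 2) • (ContinuousLinearMap.adjoint T ∘L T),
      ∃ A : H →L[ℂ] H, T = ContinuousLinearMap.adjoint T ∘L A] := by
    tfae_have 1 → 3 := Posinormal.exists_comp_adjoint_le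
    tfae_have 3 → 2
    | ⟨_, _, h⟩ => ContinuousLinearMap.range_subset_range_adjoint_of_comp_adjoint_le h
    tfae_have 2 → 4 := ContinuousLinearMap.exists_eq_comp_of_range_subset _ T
    tfae_have 4 → 1
    | ⟨_, hA⟩ => posinormal_of_eq_adjoint_comp hA
    tfae_finish
  exact ⟨tfae.out 0 1, tfae.out 0 2, tfae.out 0 3⟩
end
end

section
/- Let ψ(z) = z² and φ(z) = a z with 0 < |a| < 1. Then the weighted composition-differentiation operator D_{ψ,φ} f = ψ · (f' ∘ φ) is bounded on H²(𝔻), acts as the unilateral weighted shift sending the monomial z^k to k a^{k-1} z^{k+1} (and 1 to 0), is posinormal, but is not normal. -/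
open Complex Metric
open scoped InnerProductSpace

noncomputable section

/-!
In the monomial basis, `D_{z², az}` is the weighted shift `e_k ↦ w_k e_{k+1}` with
`w_k = k a^(k-1)`; these weights are summable, hence bounded, because `|a| < 1`.
For a weighted shift `T` and a diagonal `P = diag(p)`, both `T T*` and `T* P T` are diagonal,
with entries `|w_{k-1}|²` and `|w_k|² p_{k+1}`, so `T` is posinormal as soon as the ratios
`|w_k| / |w_{k+1}|` are bounded (here by `1/|a|`): take `P = D* D` with `D` the diagonal of
those ratios. Normality would force `|w_k|² = |w_{k-1}|²` for all `k` and `w_0 = 0`, i.e. `w = 0`.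
-/

open ComplexConjugate

theorem summable_natCast_mul_pow_pred {r : ℝ} (hr : ‖r‖ < 1) :
    Summable fun k : ℕ => (k : ℝ) * r ^ (k - 1) := by
  refine (summable_nat_add_iff 1).mp (((summable_pow_mul_geometric_of_norm_lt_one 1 hr).add
    (summable_geometric_of_norm_lt_one hr)).congr fun k => ?_)
  rw [Nat.add_sub_cancel, pow_one]
  push_cast
  ring

theorem summable_mul_pow_of_norm_le {c : ℕ → ℂ} {M : ℝ} (hc : ∀ k, ‖c k‖ ≤ M) {z : ℂ}
    (hz : ‖z‖ < 1) : Summable fun k => c k * z ^ k := by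
  refine Summable.of_norm_bounded ((summable_geometric_of_lt_one (norm_nonneg z) hz).mul_left M)
    fun k => ?_
  rw [norm_mul, norm_pow]
  exact mul_le_mul_of_nonneg_right (hc k) (by positivity)

theorem hasDerivAt_tsum_mul_pow {c : ℕ → ℂ} {M : ℝ} (hc : ∀ k, ‖c k‖ ≤ M) {y : ℂ}
    (hy : ‖y‖ < 1) :
    HasDerivAt (fun z => ∑' k, c k * z ^ k) (∑' k, c k * (k * y ^ (k - 1))) y := by
  obtain ⟨r, hyr, hr1⟩ := exists_between hy
  have hr0 : 0 < r := (norm_nonneg y).trans_lt hyr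
  have hu : Summable fun k : ℕ => M * (k * r ^ (k - 1)) :=
    (summable_natCast_mul_pow_pred (by rwa [Real.norm_of_nonneg hr0.le])).mul_left M
  refine hasDerivAt_tsum_of_isPreconnected hu isOpen_ball (convex_ball 0 r).isPreconnected
    (fun k z _ => (hasDerivAt_pow k z).const_mul (c k)) (fun k z hz => ?_)
    (mem_ball_self hr0) (summable_mul_pow_of_norm_le hc (by simp)) (mem_ball_zero_iff.mpr hyr)
  rw [norm_mul, norm_mul, norm_pow, Complex.norm_natCast]
  gcongr
  · exact (norm_nonneg _).trans (hc 0)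
  · exact hc k
  · exact (mem_ball_zero_iff.mp hz).le

namespace H2

theorem apply_eq_inner_single (f : H2) (k : ℕ) : f k = ⟪lp.single 2 k (1 : ℂ), f⟫_ℂ := by
  simp [lp.inner_single_left]

theorem adjoint_apply_of_apply_single {T : H2 →L[ℂ] H2} {c : ℕ → ℂ} {σ : ℕ → ℕ}
    (hT : ∀ k, T (lp.single 2 k 1) = c k • lp.single 2 (σ k) 1) (f : H2) (k : ℕ) :
    (ContinuousLinearMap.adjoint T f) k = conj (c k) * f (σ k) := by
  rw [apply_eq_inner_single, ContinuousLinearMap.adjoint_inner_right, hT, inner_smul_left,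
    ← apply_eq_inner_single]

section Diagonal

variable {w : ℕ → ℂ} {C : ℝ}

theorem norm_mul_apply_le_smul_apply (hw : ∀ k, ‖w k‖ ≤ C) (f : H2) (k : ℕ) :
    ‖w k * f k‖ ≤ ‖((C : ℂ) • f) k‖ := by
  rw [lp.coeFn_smul, Pi.smul_apply, norm_mul, norm_smul, Complex.norm_real,
    Real.norm_of_nonneg ((norm_nonneg _).trans (hw 0))]
  exact mul_le_mul_of_nonneg_right (hw k) (norm_nonneg _)

variable (w)

def diagonal (hw : ∀ k, ‖w k‖ ≤ C) : H2 →L[ℂ] H2 :=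
  LinearMap.mkContinuous
    { toFun := fun f => ⟨fun k => w k * f k, ((lp.memℓp f).const_smul (C : ℂ)).mono'
        (norm_mul_apply_le_smul_apply hw f)⟩
      map_add' := fun f g => lp.ext <| funext fun k => mul_add _ _ _
      map_smul' := fun c f => lp.ext <| funext fun k => mul_left_comm _ _ _ }
    C fun f => by
      refine (lp.norm_mono two_ne_zero (norm_mul_apply_le_smul_apply hw f)).trans ?_
      rw [norm_smul, Complex.norm_real, Real.norm_of_nonneg ((norm_nonneg _).trans (hw 0))]

@[simp] theorem diagonal_apply (hw : ∀ k, ‖w k‖ ≤ C) (f : H2) (k : ℕ) :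
    diagonal w hw f k = w k * f k := rfl

theorem diagonal_single (hw : ∀ k, ‖w k‖ ≤ C) (k : ℕ) :
    diagonal w hw (lp.single 2 k 1) = w k • lp.single 2 k 1 := by
  ext m
  rcases eq_or_ne m k with rfl | hm <;> simp [lp.single_apply, *]

@[simp] theorem adjoint_diagonal_apply (hw : ∀ k, ‖w k‖ ≤ C) (f : H2) (k : ℕ) :
    ContinuousLinearMap.adjoint (diagonal w hw) f k = conj (w k) * f k :=
  adjoint_apply_of_apply_single (diagonal_single w hw) f k

end Diagonal

def shiftSeq (f : ℕ → ℂ) : ℕ → ℂ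
  | 0 => 0
  | k + 1 => f k

theorem memℓp_shiftSeq (f : H2) : Memℓp (shiftSeq f) 2 := by
  refine memℓp_gen ((summable_nat_add_iff 1).mp ?_)
  simpa [shiftSeq] using (lp.memℓp f).summable (by norm_num)

theorem norm_mk_shiftSeq (f : H2) : ‖(⟨shiftSeq f, memℓp_shiftSeq f⟩ : H2)‖ = ‖f‖ := by
  have hp : 0 < (2 : ENNReal).toReal := by norm_num
  rw [← Real.rpow_left_inj (norm_nonneg _) (norm_nonneg _) hp.ne', lp.norm_rpow_eq_tsum hp,
    lp.norm_rpow_eq_tsum hp, ((memℓp_shiftSeq f).summable hp).tsum_eq_zero_add]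
  simp [shiftSeq]

def shift : H2 →L[ℂ] H2 :=
  LinearMap.mkContinuous
    { toFun := fun f => ⟨shiftSeq f, memℓp_shiftSeq f⟩
      map_add' := fun f g => lp.ext <| funext fun k => by
        change _ = shiftSeq f k + shiftSeq g k
        cases k <;> simp [shiftSeq]
      map_smul' := fun c f => lp.ext <| funext fun k => by cases k <;> simp [shiftSeq] }
    1 fun f => by rw [one_mul]; exact (norm_mk_shiftSeq f).le

@[simp] theorem shift_apply_zero (f : H2) : shift f 0 = 0 := rfl

@[simp] theorem shift_apply_succ (f : H2) (k : ℕ) : shift f (k + 1) = f k := rfl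

section WeightedShift

variable (w : ℕ → ℂ) {C : ℝ} (hw : ∀ k, ‖w k‖ ≤ C)

def weightedShift : H2 →L[ℂ] H2 := shift ∘L diagonal w hw

@[simp] theorem weightedShift_apply_zero (f : H2) : weightedShift w hw f 0 = 0 := rfl

@[simp] theorem weightedShift_apply_succ (f : H2) (k : ℕ) :
    weightedShift w hw f (k + 1) = w k * f k := rfl

theorem weightedShift_single (k : ℕ) :
    weightedShift w hw (lp.single 2 k 1) = w k • lp.single 2 (k + 1) 1 := by
  ext (_ | m)
  · simp
  · rcases eq_or_ne m k with rfl | hm <;> simp [lp.single_apply, *]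

@[simp] theorem adjoint_weightedShift_apply (f : H2) (k : ℕ) :
    ContinuousLinearMap.adjoint (weightedShift w hw) f k = conj (w k) * f (k + 1) :=
  adjoint_apply_of_apply_single (weightedShift_single w hw) f k

-- `T T* = T* (D* D) T` for `D = diag(r)` asks for `|r_1 w_0| = 0` and
-- `|w_k| = |r_{k+2} w_{k+1}|`; the junk value `x / 0 = 0` is harmless, since under a ratio
-- bound `w_{k+1} = 0` forces `w_k = 0`.
def ratioWeight : ℕ → ℂ
  | 0 | 1 => 0
  | k + 2 => (‖w k‖ / ‖w (k + 1)‖ : ℝ)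

variable {w}

theorem norm_ratioWeight_le {c : ℝ} (h : ∀ k, ‖w k‖ ≤ c * ‖w (k + 1)‖) (k : ℕ) :
    ‖ratioWeight w k‖ ≤ max c 0 := by
  rcases k with _ | _ | k
  · simp [ratioWeight]
  · simp [ratioWeight]
  · rw [ratioWeight, Complex.norm_real, Real.norm_of_nonneg (by positivity)]
    exact div_le_of_le_mul₀ (norm_nonneg _) (le_max_right _ _)
      ((h k).trans (mul_le_mul_of_nonneg_right (le_max_left _ _) (norm_nonneg _)))

theorem posinormal_weightedShift {c : ℝ} (h : ∀ k, ‖w k‖ ≤ c * ‖w (k + 1)‖) :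
    Posinormal (weightedShift w hw) := by
  set D := diagonal (ratioWeight w) (norm_ratioWeight_le h)
  refine ⟨ContinuousLinearMap.adjoint D ∘L D, D.isPositive_adjoint_comp_self, ?_⟩
  ext f (_ | k)
  · simp [D, ratioWeight]
  · simp only [ContinuousLinearMap.comp_apply, weightedShift_apply_succ,
      adjoint_weightedShift_apply, adjoint_diagonal_apply, diagonal_apply, ratioWeight,
      ofReal_div, map_div₀, conj_ofReal, D]
    rcases eq_or_ne (w (k + 1)) 0 with hk | hk
    · have hk' : w k = 0 := norm_le_zero_iff.mp (by simpa [hk] using h k)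
      simp [hk, hk']
    · have hnorm : (‖w (k + 1)‖ : ℂ) ≠ 0 := by simpa using hk
      field_simp
      rw [Complex.mul_conj', ← Complex.conj_mul' (w (k + 1))]
      ring

theorem eq_zero_of_normal_weightedShift
    (h : weightedShift w hw ∘L ContinuousLinearMap.adjoint (weightedShift w hw) =
      ContinuousLinearMap.adjoint (weightedShift w hw) ∘L weightedShift w hw) : w = 0 := by
  have hcoord (k : ℕ) := congr(($h (lp.single 2 k 1)) k)
  have h0 := hcoord 0
  have hs := fun k => hcoord (k + 1)
  simp only [ContinuousLinearMap.comp_apply, weightedShift_apply_zero, adjoint_weightedShift_apply,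
    weightedShift_apply_succ, lp.single_apply, Pi.single_eq_same, mul_one, zero_eq_mul, map_eq_zero,
    or_self] at h0 hs
  simp only [Complex.mul_conj', Complex.conj_mul'] at hs
  funext k
  induction k with
  | zero => exact h0
  | succ k ih => simpa [ih] using (hs k).symm

end WeightedShift

theorem hasDerivAt_toFun (f : H2) {y : ℂ} (hy : ‖y‖ < 1) :
    HasDerivAt f.toFun (∑' k, f k * (k * y ^ (k - 1))) y :=
  hasDerivAt_tsum_mul_pow (lp.norm_apply_le_norm two_ne_zero f) hy

theorem toFun_shift (f : H2) {z : ℂ} (hz : ‖z‖ < 1) : (shift f).toFun z = z * f.toFun z := by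
  rw [H2.toFun, H2.toFun, (summable_mul_pow_of_norm_le
    (lp.norm_apply_le_norm two_ne_zero (shift f)) hz).tsum_eq_zero_add, ← tsum_mul_left]
  simp only [shift_apply_zero, shift_apply_succ, zero_mul, zero_add, pow_succ]
  exact tsum_congr fun k => by ring

theorem isWCD_weightedShift {a : ℂ} (ha : ‖a‖ ≤ 1) {C : ℝ}
    (hw : ∀ k : ℕ, ‖(k : ℂ) * a ^ (k - 1)‖ ≤ C) :
    IsWCD (fun z => z ^ 2) (fun z => a * z) 1 (weightedShift (fun k => k * a ^ (k - 1)) hw) := by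
  intro f z hz
  have hz1 : ‖z‖ < 1 := mem_ball_zero_iff.mp hz
  have haz : ‖a * z‖ < 1 := by
    rw [norm_mul]
    exact (mul_le_of_le_one_left (norm_nonneg z) ha).trans_lt hz1
  rw [iteratedDeriv_one, (hasDerivAt_toFun f haz).deriv, weightedShift,
    ContinuousLinearMap.comp_apply, toFun_shift _ hz1, H2.toFun, ← tsum_mul_left, ← tsum_mul_left]
  refine tsum_congr fun k => ?_
  rcases k with _ | k
  · simp
  · simp [mul_pow, pow_succ]
    ring

end H2

theorem norm_natCast_mul_pow_pred_le {a : ℂ} (ha : a ≠ 0) (k : ℕ) :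
    ‖(k : ℂ) * a ^ (k - 1)‖ ≤ ‖a‖⁻¹ * ‖((k + 1 : ℕ) : ℂ) * a ^ (k + 1 - 1)‖ := by
  rcases k with _ | k
  · simp
  · simp only [norm_mul, norm_pow, Complex.norm_natCast, Nat.add_sub_cancel]
    calc ((k + 1 : ℕ) : ℝ) * ‖a‖ ^ k ≤ ((k + 1 + 1 : ℕ) : ℝ) * ‖a‖ ^ k := by gcongr; omega
      _ = ‖a‖⁻¹ * (((k + 1 + 1 : ℕ) : ℝ) * ‖a‖ ^ (k + 1)) := by
        rw [pow_succ', mul_left_comm, inv_mul_cancel_left₀ (norm_ne_zero_iff.mpr ha)]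

/-- With `ψ(z) = z²` and `φ(z) = a z`, `0 < |a| < 1`: `D_{ψ,φ}` is bounded on `H²(𝔻)`,
sends `z^k` to `k a^(k-1) z^(k+1)` (and `1` to `0`), is posinormal, but is not normal. -/
theorem stmt5 (a : ℂ) (ha0 : 0 < ‖a‖) (ha1 : ‖a‖ < 1) :
    ∃ T : H2 →L[ℂ] H2,
      IsWCD (fun z => z ^ 2) (fun z => a * z) 1 T ∧
      (∀ k : ℕ, T (lp.single 2 k 1) =
        ((k : ℂ) * a ^ (k - 1)) • (lp.single 2 (k + 1) 1 : H2)) ∧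
      Posinormal T ∧
      ¬ (T ∘L ContinuousLinearMap.adjoint T = ContinuousLinearMap.adjoint T ∘L T) := by
  have hsum : Summable fun k : ℕ => ‖(k : ℂ) * a ^ (k - 1)‖ := by
    simpa using summable_natCast_mul_pow_pred (r := ‖a‖) (by simpa using ha1)
  have hw (k : ℕ) : ‖(k : ℂ) * a ^ (k - 1)‖ ≤ ∑' j : ℕ, ‖(j : ℂ) * a ^ (j - 1)‖ :=
    hsum.le_tsum k fun _ _ => norm_nonneg _
  refine ⟨H2.weightedShift _ hw, H2.isWCD_weightedShift ha1.le hw, H2.weightedShift_single _ hw,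
    H2.posinormal_weightedShift hw (norm_natCast_mul_pow_pred_le (norm_pos_iff.mp ha0)),
    fun h => ?_⟩
  simpa using congrFun (H2.eq_zero_of_normal_weightedShift hw h) 1
end
end

section
/- Let ψ(z) = z² and φ(z) = z²/2 on 𝔻. Then D_{ψ,φ} f = ψ · (f' ∘ φ) is bounded on H²(𝔻) and is not coposinormal: the function g(z) = z³ lies in Kernel(D_{ψ,φ}^*) but not in Kernel(D_{ψ,φ}). -/
open Complex Metric
open scoped InnerProductSpace

noncomputable section

/-!
On Taylor coefficients, `f = ∑ aₖ zᵏ ↦ z² f'(z²/2) = ∑ k aₖ z²ᵏ / 2ᵏ⁻¹`, so `D_{ψ,φ}` is the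
contractive diagonal operator with weights `k / 2ᵏ⁻¹ ≤ 1` followed by the isometry
`f ↦ f(z²)`, which moves the `k`-th coefficient to index `2k`. Its range has no odd coefficients,
hence `z³ ⊥ range D`, i.e. `z³ ∈ ker D*`, while `D z³ = (3/4) z⁶ ≠ 0`. If `D*` were posinormal,
then `ker D* ⊆ ker D** = ker D`.
-/

open Function
open scoped ENNReal

theorem Posinormal.adjoint_apply_eq_zero {H : Type*} [NormedAddCommGroup H]
    [InnerProductSpace ℂ H] [CompleteSpace H] {T : H →L[ℂ] H} (hT : Posinormal T) {x : H}
    (hx : T x = 0) : ContinuousLinearMap.adjoint T x = 0 := by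
  obtain ⟨P, -, hP⟩ := hT
  have hTT : T (ContinuousLinearMap.adjoint T x) = 0 := by
    simpa [hx] using congr($hP x)
  rw [← inner_self_eq_zero (𝕜 := ℂ), ContinuousLinearMap.adjoint_inner_left, hTT, inner_zero_right]

theorem ENNReal.toReal_pos_of_one_le {p : ℝ≥0∞} (h1 : 1 ≤ p) (hp : p ≠ ∞) : 0 < p.toReal :=
  ENNReal.toReal_pos (zero_lt_one.trans_le h1).ne' hp

section Extend

variable {𝕜 α β E : Type*} [NormedField 𝕜] [NormedAddCommGroup E] [NormedSpace 𝕜 E]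
  {p : ℝ≥0∞} {e : α → β}

theorem norm_extend_zero_rpow (f : α → E) {r : ℝ} (hr : r ≠ 0) :
    (fun b => ‖extend e f 0 b‖ ^ r) = extend e (fun a => ‖f a‖ ^ r) 0 := by
  ext b
  rw [apply_extend (fun x : E => ‖x‖ ^ r)]
  congr 1
  ext
  simp [Real.zero_rpow hr]

theorem tsum_extend_zero_mul {R : Type*} [NonUnitalNonAssocSemiring R] [TopologicalSpace R]
    (he : Injective e) (g : α → R) (c : β → R) :
    ∑' b, extend e g 0 b * c b = ∑' a, g a * c (e a) := by
  rw [← tsum_extend_zero he]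
  congr 1
  ext b
  by_cases hb : ∃ a, e a = b
  · obtain ⟨a, rfl⟩ := hb
    simp [he.extend_apply]
  · simp [extend_apply' _ _ _ hb]

theorem Memℓp.extend_zero (hp : 0 < p.toReal) (he : Injective e) {f : α → E}
    (hf : Memℓp f p) : Memℓp (extend e f 0) p := by
  rw [memℓp_gen_iff hp] at hf ⊢
  rwa [norm_extend_zero_rpow f hp.ne', summable_extend_zero he]

variable (𝕜 E) in
def lp.extendZero [Fact (1 ≤ p)] (hp : p ≠ ∞) (he : Injective e) :
    lp (fun _ : α => E) p →ₗᵢ[𝕜] lp (fun _ : β => E) p where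
  toFun f := ⟨extend e f 0,
    (lp.memℓp f).extend_zero (ENNReal.toReal_pos_of_one_le Fact.out hp) he⟩
  map_add' f g := lp.ext <| by
    change extend e ⇑(f + g) 0 = extend e f 0 + extend e g 0
    simpa only [lp.coeFn_add, add_zero] using extend_add e f g 0 0
  map_smul' c f := lp.ext <| by
    change extend e ⇑(c • f) 0 = c • extend e f 0
    simpa only [lp.coeFn_smul, smul_zero] using extend_smul c e f 0
  norm_map' f := by
    have hp' := ENNReal.toReal_pos_of_one_le Fact.out hp
    rw [lp.norm_eq_tsum_rpow hp', lp.norm_eq_tsum_rpow hp']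
    change (∑' b, ‖extend e f 0 b‖ ^ p.toReal) ^ _ = _
    rw [norm_extend_zero_rpow _ hp'.ne', tsum_extend_zero he]

end Extend

section Diagonal

variable {𝕜 α E : Type*} [NormedField 𝕜] [NormedAddCommGroup E] [NormedSpace 𝕜 E]
  {p : ℝ≥0∞} [Fact (1 ≤ p)]

theorem norm_smul_le_of_norm_le_one {w : 𝕜} (hw : ‖w‖ ≤ 1) (x : E) : ‖w • x‖ ≤ ‖x‖ := by
  simpa [norm_smul] using mul_le_of_le_one_left (norm_nonneg x) hw

variable (E p) in
def lp.diagonal (w : α → 𝕜) (hw : ∀ i, ‖w i‖ ≤ 1) :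
    lp (fun _ : α => E) p →L[𝕜] lp (fun _ : α => E) p :=
  LinearMap.mkContinuous
    { toFun f := ⟨fun i => w i • f i,
        (lp.memℓp f).mono' fun i => norm_smul_le_of_norm_le_one (hw i) _⟩
      map_add' f g := lp.ext <| funext fun i => smul_add (w i) (f i) (g i)
      map_smul' c f := lp.ext <| funext fun i => smul_comm (w i) c (f i) }
    1 fun f => by
      rw [one_mul]
      exact lp.norm_mono (zero_lt_one.trans_le Fact.out).ne' fun i =>
        norm_smul_le_of_norm_le_one (hw i) _

end Diagonal

theorem FormalMultilinearSeries.hasDerivAt_sum_eq_tsum_coeff {𝕜 F : Type*}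
    [NontriviallyNormedField 𝕜] [NormedAddCommGroup F] [NormedSpace 𝕜 F] [CompleteSpace F]
    {p : FormalMultilinearSeries 𝕜 𝕜 F} {x : 𝕜} (h : ‖x‖ₑ < p.radius) :
    HasDerivAt p.sum (∑' n, x ^ n • (n + 1) • p.coeff (n + 1)) x := by
  have hsum : Summable fun n => p.derivSeries n fun _ => x :=
    p.derivSeries.summable (by simpa using h.trans_le p.radius_le_radius_derivSeries)
  convert (p.hasFDerivAt_sum h).hasDerivAt using 1
  have := (ContinuousLinearMap.apply 𝕜 F (1 : 𝕜)).map_tsum hsum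
  simp only [ContinuousLinearMap.apply_apply] at this
  rw [FormalMultilinearSeries.sum, this]
  simp

namespace H2

open FormalMultilinearSeries

theorem toFun_eq_sum (f : H2) : toFun f = (ofScalars ℂ ⇑f).sum := by
  ext z
  simp [toFun, FormalMultilinearSeries.sum, mul_comm]

theorem one_le_radius (f : H2) : 1 ≤ (ofScalars ℂ ⇑f).radius := by
  simpa using (ofScalars ℂ ⇑f).le_radius_of_bound ‖f‖ (r := 1) fun n => by
    simpa [ofScalars_norm] using lp.norm_apply_le_norm two_ne_zero f n

theorem hasDerivAt_toFun_s10 (f : H2) {w : ℂ} (hw : ‖w‖ < 1) :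
    HasDerivAt (toFun f) (∑' n, (n + 1) * f (n + 1) * w ^ n) w := by
  have hr : ‖w‖ₑ < (ofScalars ℂ ⇑f).radius :=
    lt_of_lt_of_le (by rwa [← ofReal_norm, ENNReal.ofReal_lt_one]) (one_le_radius f)
  rw [toFun_eq_sum]
  refine (hasDerivAt_sum_eq_tsum_coeff hr).congr_deriv (tsum_congr fun n => ?_)
  simp [coeff_ofScalars]
  ring

end H2

-- `k - 1` truncates at `k = 0`, where the weight is `0` anyway.
def derivWeight (k : ℕ) : ℂ := k / 2 ^ (k - 1)

theorem derivWeight_succ (n : ℕ) : derivWeight (n + 1) = (n + 1) / 2 ^ n := by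
  simp [derivWeight]

theorem norm_derivWeight_le_one (k : ℕ) : ‖derivWeight k‖ ≤ 1 := by
  rcases k with _ | n
  · simp [derivWeight]
  · rw [derivWeight_succ, norm_div, norm_pow, Complex.norm_two, div_le_one (by positivity),
      ← Nat.cast_succ, Complex.norm_natCast]
    exact_mod_cast Nat.lt_two_pow_self

theorem Nat.two_mul_injective : Injective (fun k : ℕ => 2 * k) :=
  mul_right_injective₀ two_ne_zero

def Dψφ : H2 →L[ℂ] H2 :=
  (lp.extendZero ℂ ℂ (p := 2) ENNReal.ofNat_ne_top Nat.two_mul_injective).toContinuousLinearMap ∘L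
    lp.diagonal ℂ 2 derivWeight norm_derivWeight_le_one

theorem coe_Dψφ (f : H2) : ⇑(Dψφ f) = extend (2 * ·) (fun k => derivWeight k * f k) 0 := rfl

theorem Dψφ_apply_two_mul (f : H2) (k : ℕ) : Dψφ f (2 * k) = derivWeight k * f k := by
  rw [coe_Dψφ, Nat.two_mul_injective.extend_apply]

theorem Dψφ_apply_of_odd (f : H2) {m : ℕ} (hm : Odd m) : Dψφ f m = 0 := by
  rw [coe_Dψφ, extend_apply' _ _ _ ?_, Pi.zero_apply]
  rintro ⟨k, rfl⟩
  exact Nat.not_odd_iff_even.mpr (even_two_mul k) hm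

theorem Dψφ_isWCD : IsWCD (fun z => z ^ 2) (fun z => z ^ 2 / 2) 1 Dψφ := by
  intro f z hz
  have hw : ‖z ^ 2 / 2‖ < 1 := by
    have : ‖z‖ < 1 := mem_ball_zero_iff.mp hz
    rw [norm_div, norm_pow, Complex.norm_two]
    nlinarith [norm_nonneg z]
  rw [iteratedDeriv_one, (H2.hasDerivAt_toFun_s10 f hw).deriv, ← tsum_mul_left]
  calc H2.toFun (Dψφ f) z = ∑' k, derivWeight k * f k * z ^ (2 * k) := by
        simp only [H2.toFun, coe_Dψφ, tsum_extend_zero_mul Nat.two_mul_injective]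
    _ = ∑' n, derivWeight (n + 1) * f (n + 1) * z ^ (2 * (n + 1)) := by
        set a : ℕ → ℂ := fun k => derivWeight k * f k * z ^ (2 * k)
        exact (tsum_pnat_eq_tsum_of_eq_zero (f := a) (by simp [a, derivWeight])).symm.trans
          tsum_pnat_eq_tsum_succ
    _ = _ := tsum_congr fun n => by
        rw [derivWeight_succ, div_pow]
        field_simp
        ring

theorem adjoint_Dψφ_single_three : ContinuousLinearMap.adjoint Dψφ (lp.single 2 3 1) = 0 := by
  refine ext_inner_left ℂ fun v => ?_
  rw [ContinuousLinearMap.adjoint_inner_right, lp.inner_single_right,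
    Dψφ_apply_of_odd v (by decide), inner_zero_left, inner_zero_right]

theorem Dψφ_single_three_ne_zero : Dψφ (lp.single 2 3 1) ≠ 0 := by
  intro h
  have h6 := congr($h 6)
  rw [show 6 = 2 * 3 from rfl, Dψφ_apply_two_mul, lp.single_apply_self] at h6
  norm_num [derivWeight] at h6

/-- With `ψ(z) = z²` and `φ(z) = z²/2`, `D_{ψ,φ}` is bounded on `H²(𝔻)` but not
coposinormal: `g(z) = z³` lies in `ker D_{ψ,φ}*` but not in `ker D_{ψ,φ}`. -/
theorem stmt10 :
    ∃ T : H2 →L[ℂ] H2,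
      IsWCD (fun z => z ^ 2) (fun z => z ^ 2 / 2) 1 T ∧
      ContinuousLinearMap.adjoint T (lp.single 2 3 1) = 0 ∧
      T (lp.single 2 3 1) ≠ 0 ∧
      ¬ Posinormal (ContinuousLinearMap.adjoint T) := by
  refine ⟨Dψφ, Dψφ_isWCD, adjoint_Dψφ_single_three, Dψφ_single_three_ne_zero, fun hpos => ?_⟩
  apply Dψφ_single_three_ne_zero
  simpa using hpos.adjoint_apply_eq_zero adjoint_Dψφ_single_three
end
end

section
/- Let φ(z) = (az + b)/(cz + d) with ad − bc ≠ 0 be a linear fractional self-map of 𝔻 with ‖φ‖_∞ < 1, let σ(z) = (\overline{a} z − \overline{c})/(−\overline{b} z + \overline{d}), and let ψ(z) = z^n ψ₁(z) with ψ₁ ∈ H^∞(𝔻). Then on H²(𝔻), D_{ψ,φ,n}^* = T_g D_{σ,n} T_h^*, where g(z) = z^n/(−\overline{b} z + \overline{d})^{n+1}, h(z) = ψ₁(z)(cz + d)^{n+1}, T_g and T_h are the analytic Toeplitz (multiplication) operators, and D_{σ,n} f = f^{(n)} ∘ σ. -/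
open Complex Metric
open scoped InnerProductSpace

noncomputable section

/-! Both operators are determined by their values on the reproducing kernels `K_w`,
`⟪K_w, f⟫ = f(w)`, with `w` in any small disc around `0`. Since
`⟪D_{ψ,φ,n} K_z, K_w⟫ = ψ(w) K_z⁽ⁿ⁾(φ(w))` and `T_h* K_w = conj (h w) • K_w`, both sides applied
to `K_w` are explicit rational functions of `z`, and they agree because of the identity
`(1 - z conj (φ w)) conj (c w + d) = (1 - conj w σ(z)) (-conj b z + conj d)`.
The bound `‖φ‖_∞ < 1` together with `ad - bc ≠ 0` forces `c z + d ≠ 0` on the disc and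
`‖b‖ < ‖d‖`, so `σ` is bounded on the disc and `K_w⁽ⁿ⁾ ∘ σ` is given by its closed form for
small `w`. -/

open ComplexConjugate Filter Topology ContinuousLinearMap

namespace H2

lemma summable_coeff_mul_pow (f : H2) {z : ℂ} (hz : ‖z‖ < 1) :
    Summable fun k : ℕ => f k * z ^ k := by
  refine .of_norm_bounded (summable_geometric_of_lt_one (norm_nonneg z) hz |>.mul_left ‖f‖)
    fun k => ?_
  rw [norm_mul, norm_pow]
  gcongr
  exact lp.norm_apply_le_norm two_ne_zero f k

lemma toFun_smul (c : ℂ) (f : H2) (z : ℂ) : toFun (c • f) z = c * toFun f z := by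
  simp only [toFun, lp.coeFn_smul, Pi.smul_apply, smul_eq_mul, mul_assoc, tsum_mul_left]

lemma hasFPowerSeriesOnBall_toFun (f : H2) :
    HasFPowerSeriesOnBall (toFun f) (FormalMultilinearSeries.ofScalars ℂ fun k => f k) 0 1 where
  r_le := by
    refine ENNReal.le_of_forall_nnreal_lt fun r hr =>
      FormalMultilinearSeries.le_radius_of_bound _ ‖f‖ fun k => ?_
    rw [FormalMultilinearSeries.ofScalars_norm]
    calc ‖f k‖ * (r : ℝ) ^ k ≤ ‖f k‖ * 1 := by
          gcongr
          exact pow_le_one₀ r.coe_nonneg (by exact_mod_cast hr.le)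
      _ ≤ ‖f‖ := by simpa using lp.norm_apply_le_norm two_ne_zero f k
  r_pos := one_pos
  hasSum {y} hy := by
    rw [← ENNReal.coe_one, Metric.eball_coe, NNReal.coe_one, mem_ball_zero_iff] at hy
    simp only [zero_add, FormalMultilinearSeries.ofScalars_apply_eq, smul_eq_mul]
    exact (summable_coeff_mul_pow f hy).hasSum

lemma eq_of_eqOn_ball {f g : H2} {ρ : ℝ} (hρ : 0 < ρ)
    (h : Set.EqOn (toFun f) (toFun g) (ball 0 ρ)) : f = g := by
  have hfg : toFun f =ᶠ[𝓝 0] toFun g := eventually_of_mem (ball_mem_nhds 0 hρ) h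
  have := ((hasFPowerSeriesOnBall_toFun f).hasFPowerSeriesAt.congr hfg).eq_formalMultilinearSeries
    (hasFPowerSeriesOnBall_toFun g).hasFPowerSeriesAt
  exact lp.ext (FormalMultilinearSeries.ofScalars_series_injective ℂ ℂ this)

lemma memℓp_conj_pow {w : ℂ} (hw : w ∈ ball (0 : ℂ) 1) :
    Memℓp (fun k : ℕ => conj w ^ k) 2 := by
  refine memℓp_gen ?_
  have hw : ‖w‖ ^ 2 < 1 := by
    rw [mem_ball_zero_iff] at hw
    nlinarith [norm_nonneg w]
  simpa [← pow_mul, mul_comm] using summable_geometric_of_lt_one (by positivity) hw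

def kernel (w : ℂ) (hw : w ∈ ball (0 : ℂ) 1) : H2 := ⟨fun k => conj w ^ k, memℓp_conj_pow hw⟩

section Kernel

variable {w : ℂ} (hw : w ∈ ball (0 : ℂ) 1)

lemma inner_kernel_left (f : H2) : ⟪kernel w hw, f⟫_ℂ = toFun f w := by
  rw [lp.inner_eq_tsum]
  refine tsum_congr fun k => ?_
  simp [kernel, mul_comm]

lemma toFun_kernel {u : ℂ} (hu : ‖conj w * u‖ < 1) :
    toFun (kernel w hw) u = (1 - conj w * u)⁻¹ := by
  simp only [toFun, kernel, ← mul_pow]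
  exact tsum_geometric_of_norm_lt_one hu

lemma iteratedDeriv_toFun_kernel (n : ℕ) {u : ℂ} (hu : ‖conj w * u‖ < 1) :
    iteratedDeriv n (toFun (kernel w hw)) u =
      n.factorial * conj w ^ n / (1 - conj w * u) ^ (n + 1) := by
  have hopen : IsOpen {u : ℂ | ‖conj w * u‖ < 1} := isOpen_lt (by fun_prop) continuous_const
  have heq : toFun (kernel w hw) =ᶠ[𝓝 u] fun u => (-conj w * u + 1)⁻¹ :=
    eventually_of_mem (hopen.mem_nhds hu) fun v hv => by
      rw [toFun_kernel hw hv]; ring_nf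
  have hexp : (-1 - n : ℤ) = -((n + 1 : ℕ) : ℤ) := by push_cast; ring
  rw [heq.iteratedDeriv_eq, iteratedDeriv_eq_iterate, iter_deriv_inv_linear, hexp]
  have hsign : (-1 : ℂ) ^ n * (-conj w) ^ n = conj w ^ n := by rw [← mul_pow]; simp
  simp only [zpow_neg, zpow_natCast, mul_right_comm _ (n.factorial : ℂ), hsign]
  ring

lemma toFun_adjoint_apply_kernel (T : H2 →L[ℂ] H2) {z : ℂ} (hz : z ∈ ball (0 : ℂ) 1) :
    toFun (adjoint T (kernel w hw)) z = conj (toFun (T (kernel z hz)) w) := by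
  rw [← inner_kernel_left hz, adjoint_inner_right, ← inner_conj_symm, inner_kernel_left]

lemma adjoint_apply_kernel_of_toFun_apply {M : H2 →L[ℂ] H2} {m : ℂ → ℂ}
    (hM : ∀ f : H2, ∀ z ∈ ball (0 : ℂ) 1, toFun (M f) z = m z * toFun f z) :
    adjoint M (kernel w hw) = conj (m w) • kernel w hw := by
  refine ext_inner_left ℂ fun f => ?_
  rw [adjoint_inner_right, inner_smul_right, ← inner_conj_symm, inner_kernel_left, hM f w hw,
    ← inner_conj_symm f, inner_kernel_left, map_mul]

end Kernel

lemma toFun_adjoint_apply_kernel_of_isWCD {ψ φ : ℂ → ℂ} {n : ℕ} {T : H2 →L[ℂ] H2}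
    (hT : IsWCD ψ φ n T) {w z : ℂ} (hw : w ∈ ball (0 : ℂ) 1) (hz : z ∈ ball (0 : ℂ) 1)
    (hφw : ‖φ w‖ ≤ 1) :
    toFun (adjoint T (kernel w hw)) z =
      conj (ψ w) * (n.factorial * z ^ n / (1 - z * conj (φ w)) ^ (n + 1)) := by
  have hzφ : ‖conj z * φ w‖ < 1 := by
    rw [norm_mul, Complex.norm_conj]
    exact (mul_le_of_le_one_right (norm_nonneg z) hφw).trans_lt (mem_ball_zero_iff.mp hz)
  rw [toFun_adjoint_apply_kernel hw T hz, hT _ w hw, iteratedDeriv_toFun_kernel hz n hzφ]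
  simp [mul_comm z]

lemma ext_operator_of_kernel {S T : H2 →L[ℂ] H2} {ρ : ℝ} (hρ : 0 < ρ)
    (h : ∀ w (hw : w ∈ ball (0 : ℂ) 1), w ∈ ball (0 : ℂ) ρ →
      S (kernel w hw) = T (kernel w hw)) : S = T := by
  refine adjoint.injective <| ext fun f => eq_of_eqOn_ball (lt_min hρ one_pos) fun w hw => ?_
  have hw1 : w ∈ ball (0 : ℂ) 1 := ball_subset_ball (min_le_right _ _) hw
  rw [← inner_kernel_left hw1, ← inner_kernel_left hw1, adjoint_inner_right,
    adjoint_inner_right, h w hw1 (ball_subset_ball (min_le_left _ _) hw)]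

end H2

section LinearFractional

variable {a b c d : ℂ}

lemma norm_mul_add_le_of_norm_div_le {U : Set ℂ} (hU : IsOpen U) {r : ℝ}
    (habcd : a * d - b * c ≠ 0) (h : ∀ z ∈ U, ‖(a * z + b) / (c * z + d)‖ ≤ r)
    {z : ℂ} (hz : z ∈ U) : ‖a * z + b‖ ≤ r * ‖c * z + d‖ := by
  by_cases hz0 : c * z + d = 0
  -- the zero of `c z + d` is isolated, so the bound reaches it as a limit from nearby points
  · have hc : c ≠ 0 := by
      rintro rfl
      exact habcd (by simp_all)
    have hev : ∀ᶠ y in 𝓝[≠] z, ‖a * y + b‖ ≤ r * ‖c * y + d‖ := by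
      filter_upwards [self_mem_nhdsWithin, mem_nhdsWithin_of_mem_nhds (hU.mem_nhds hz)]
        with y hyz hyU
      have hy0 : c * y + d ≠ 0 := by
        rw [show c * y + d = c * (y - z) by linear_combination hz0]
        exact mul_ne_zero hc (sub_ne_zero.mpr hyz)
      have := h y hyU
      rwa [norm_div, div_le_iff₀ (norm_pos_iff.mpr hy0)] at this
    exact le_of_tendsto_of_tendsto
      (by fun_prop : Continuous fun y => ‖a * y + b‖).continuousWithinAt
      (by fun_prop : Continuous fun y => r * ‖c * y + d‖).continuousWithinAt hev
  · have := h z hz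
    rwa [norm_div, div_le_iff₀ (norm_pos_iff.mpr hz0)] at this

variable {r : ℝ} (habcd : a * d - b * c ≠ 0)
  (h : ∀ z ∈ ball (0 : ℂ) 1, ‖(a * z + b) / (c * z + d)‖ ≤ r)
include habcd h

lemma norm_lt_norm_of_norm_div_le (hr : r < 1) : ‖b‖ < ‖d‖ := by
  have h0 := norm_mul_add_le_of_norm_div_le isOpen_ball habcd h (mem_ball_self one_pos)
  simp only [mul_zero, zero_add] at h0
  have hd : d ≠ 0 := by
    rintro rfl
    exact habcd (by simp_all)
  nlinarith [norm_pos_iff.mpr hd]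

lemma mul_add_ne_zero_of_norm_div_le {z : ℂ} (hz : z ∈ ball (0 : ℂ) 1) : c * z + d ≠ 0 := by
  intro hz0
  have := norm_mul_add_le_of_norm_div_le isOpen_ball habcd h hz
  rw [hz0, norm_zero, mul_zero, norm_le_zero_iff] at this
  exact habcd (by linear_combination a * hz0 - c * this)

end LinearFractional

lemma norm_sub_norm_le_norm_mul_add (c d : ℂ) {z : ℂ} (hz : ‖z‖ ≤ 1) :
    ‖d‖ - ‖c‖ ≤ ‖c * z + d‖ := by
  have := norm_sub_norm_le d (-(c * z))
  rw [norm_neg, norm_mul, sub_neg_eq_add, add_comm] at this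
  nlinarith [norm_nonneg c]

lemma norm_div_le_of_norm_lt (a b : ℂ) {c d : ℂ} (hcd : ‖c‖ < ‖d‖) {z : ℂ} (hz : ‖z‖ ≤ 1) :
    ‖(a * z + b) / (c * z + d)‖ ≤ (‖a‖ + ‖b‖) / (‖d‖ - ‖c‖) := by
  rw [norm_div]
  refine div_le_div₀ (by positivity) ?_ (sub_pos.mpr hcd) (norm_sub_norm_le_norm_mul_add c d hz)
  calc ‖a * z + b‖ ≤ ‖a‖ * ‖z‖ + ‖b‖ := (norm_add_le _ _).trans (by rw [norm_mul])
    _ ≤ ‖a‖ + ‖b‖ := by gcongr; exact mul_le_of_le_one_right (norm_nonneg a) hz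

lemma exists_pos_forall_norm_mul_lt_one {α : Type*} {s : Set α} {f : α → ℂ} {R : ℝ}
    (h : ∀ x ∈ s, ‖f x‖ ≤ R) : ∃ ρ > 0, ∀ w : ℂ, ‖w‖ < ρ → ∀ x ∈ s, ‖w * f x‖ < 1 := by
  refine ⟨(|R| + 1)⁻¹, by positivity, fun w hw x hx => ?_⟩
  rw [← one_div, lt_div_iff₀ (by positivity)] at hw
  rw [norm_mul]
  nlinarith [norm_nonneg w, (h x hx).trans (le_abs_self R)]

lemma one_sub_mul_conj_div_mul_conj (a b c d w z : ℂ) (hw : c * w + d ≠ 0)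
    (hz : -conj b * z + conj d ≠ 0) :
    (1 - z * conj ((a * w + b) / (c * w + d))) * conj (c * w + d) =
      (1 - conj w * ((conj a * z - conj c) / (-conj b * z + conj d))) * (-conj b * z + conj d) := by
  rw [map_div₀, sub_mul, sub_mul, one_mul, one_mul, mul_assoc, mul_assoc,
    div_mul_cancel₀ _ ((map_ne_zero conj).mpr hw), div_mul_cancel₀ _ hz]
  simp only [map_add, map_mul]
  ring

lemma conj_mul_div_eq_conj_mul_div (a b c d p w z : ℂ) (n : ℕ) (hw : c * w + d ≠ 0)
    (hz : -conj b * z + conj d ≠ 0)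
    (hwz : 1 - conj w * ((conj a * z - conj c) / (-conj b * z + conj d)) ≠ 0) :
    conj (w ^ n * p) *
        (n.factorial * z ^ n / (1 - z * conj ((a * w + b) / (c * w + d))) ^ (n + 1)) =
      conj (p * (c * w + d) ^ (n + 1)) * (z ^ n / (-conj b * z + conj d) ^ (n + 1) *
        (n.factorial * conj w ^ n /
          (1 - conj w * ((conj a * z - conj c) / (-conj b * z + conj d))) ^ (n + 1))) := by
  have hw' : conj (c * w + d) ≠ 0 := (map_ne_zero conj).mpr hw
  rw [eq_div_of_mul_eq hw' (one_sub_mul_conj_div_mul_conj a b c d w z hw hz)]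
  simp only [map_mul, map_pow]
  generalize 1 - conj w * ((conj a * z - conj c) / (-conj b * z + conj d)) = Y at *
  generalize conj (c * w + d) = E₁ at *
  generalize -conj b * z + conj d = E₂ at *
  rw [div_pow, mul_pow]
  field_simp

theorem stmt14_general (a b c d : ℂ) (habcd : a * d - b * c ≠ 0) (n : ℕ)
    (ψ₁ : ℂ → ℂ)
    (φ σ ψ g h : ℂ → ℂ)
    (hφ : ∀ z : ℂ, φ z = (a * z + b) / (c * z + d))
    (hσ : ∀ z : ℂ, σ z =
      ((starRingEnd ℂ) a * z - (starRingEnd ℂ) c) /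
        (-(starRingEnd ℂ) b * z + (starRingEnd ℂ) d))
    (hψ : ∀ z : ℂ, ψ z = z ^ n * ψ₁ z)
    (hg : ∀ z : ℂ, g z = z ^ n / (-(starRingEnd ℂ) b * z + (starRingEnd ℂ) d) ^ (n + 1))
    (hh : ∀ z : ℂ, h z = ψ₁ z * (c * z + d) ^ (n + 1))
    (hsup : ∃ r < (1 : ℝ), ∀ z ∈ ball (0 : ℂ) 1, ‖φ z‖ ≤ r)
    (T Dσ Mg Mh : H2 →L[ℂ] H2)
    (hT : IsWCD ψ φ n T)
    (hDσ : ∀ f : H2, ∀ z ∈ ball (0 : ℂ) 1,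
      H2.toFun (Dσ f) z = iteratedDeriv n (H2.toFun f) (σ z))
    (hMg : ∀ f : H2, ∀ z ∈ ball (0 : ℂ) 1, H2.toFun (Mg f) z = g z * H2.toFun f z)
    (hMh : ∀ f : H2, ∀ z ∈ ball (0 : ℂ) 1, H2.toFun (Mh f) z = h z * H2.toFun f z) :
    ContinuousLinearMap.adjoint T = Mg ∘L Dσ ∘L ContinuousLinearMap.adjoint Mh := by
  obtain ⟨r, hr, hφr⟩ := hsup
  have hφr' : ∀ z ∈ ball (0 : ℂ) 1, ‖(a * z + b) / (c * z + d)‖ ≤ r := fun z hz =>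
    hφ z ▸ hφr z hz
  have hbd : ‖-conj b‖ < ‖conj d‖ := by simpa using norm_lt_norm_of_norm_div_le habcd hφr' hr
  have hden : ∀ z ∈ ball (0 : ℂ) 1, -conj b * z + conj d ≠ 0 := fun z hz =>
    norm_pos_iff.mp <| (sub_pos.mpr hbd).trans_le <|
      norm_sub_norm_le_norm_mul_add _ _ (mem_ball_zero_iff.mp hz).le
  obtain ⟨ρ, hρ, hρσ⟩ := exists_pos_forall_norm_mul_lt_one (s := ball (0 : ℂ) 1) (f := σ)
    fun z hz => by
      rw [hσ, sub_eq_add_neg]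
      exact norm_div_le_of_norm_lt _ _ hbd (mem_ball_zero_iff.mp hz).le
  refine H2.ext_operator_of_kernel hρ fun w hw hwρ => H2.eq_of_eqOn_ball one_pos fun z hz => ?_
  have hwσ : ‖conj w * σ z‖ < 1 := hρσ _ (by simpa using hwρ) z hz
  have hwσ' : 1 - conj w * σ z ≠ 0 := fun h0 => by simp [← sub_eq_zero.mp h0] at hwσ
  rw [hσ] at hwσ'
  rw [H2.toFun_adjoint_apply_kernel_of_isWCD hT hw hz ((hφr w hw).trans hr.le), comp_apply,
    comp_apply, H2.adjoint_apply_kernel_of_toFun_apply hw hMh, map_smul, map_smul, H2.toFun_smul,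
    hMg _ z hz, hDσ _ z hz, H2.iteratedDeriv_toFun_kernel hw n hwσ, hψ, hh, hg, hφ, hσ]
  exact conj_mul_div_eq_conj_mul_div a b c d (ψ₁ w) w z n
    (mul_add_ne_zero_of_norm_div_le habcd hφr' hw) (hden z hz) hwσ'

/-- Cowen-type adjoint formula: for a linear fractional `φ` with `‖φ‖_∞ < 1` and
`ψ(z) = zⁿ ψ₁(z)` with `ψ₁ ∈ H^∞(𝔻)`, one has `D_{ψ,φ,n}* = T_g D_{σ,n} T_h*`. -/
theorem stmt14 (a b c d : ℂ) (habcd : a * d - b * c ≠ 0) (n : ℕ) (hn : 1 ≤ n)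
    (ψ₁ : ℂ → ℂ)
    (hψ₁d : DifferentiableOn ℂ ψ₁ (ball (0 : ℂ) 1))
    (hψ₁b : ∃ M : ℝ, ∀ z ∈ ball (0 : ℂ) 1, ‖ψ₁ z‖ ≤ M)
    (φ σ ψ g h : ℂ → ℂ)
    (hφ : ∀ z : ℂ, φ z = (a * z + b) / (c * z + d))
    (hσ : ∀ z : ℂ, σ z =
      ((starRingEnd ℂ) a * z - (starRingEnd ℂ) c) /
        (-(starRingEnd ℂ) b * z + (starRingEnd ℂ) d))
    (hψ : ∀ z : ℂ, ψ z = z ^ n * ψ₁ z)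
    (hg : ∀ z : ℂ, g z = z ^ n / (-(starRingEnd ℂ) b * z + (starRingEnd ℂ) d) ^ (n + 1))
    (hh : ∀ z : ℂ, h z = ψ₁ z * (c * z + d) ^ (n + 1))
    (hsup : ∃ r < (1 : ℝ), ∀ z ∈ ball (0 : ℂ) 1, ‖φ z‖ ≤ r)
    (T Dσ Mg Mh : H2 →L[ℂ] H2)
    (hT : IsWCD ψ φ n T)
    (hDσ : ∀ f : H2, ∀ z ∈ ball (0 : ℂ) 1,
      H2.toFun (Dσ f) z = iteratedDeriv n (H2.toFun f) (σ z))
    (hMg : ∀ f : H2, ∀ z ∈ ball (0 : ℂ) 1, H2.toFun (Mg f) z = g z * H2.toFun f z)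
    (hMh : ∀ f : H2, ∀ z ∈ ball (0 : ℂ) 1, H2.toFun (Mh f) z = h z * H2.toFun f z) :
    ContinuousLinearMap.adjoint T = Mg ∘L Dσ ∘L ContinuousLinearMap.adjoint Mh :=
  stmt14_general a b c d habcd n ψ₁ φ σ ψ g h hφ hσ hψ hg hh hsup T Dσ Mg Mh hT hDσ hMg hMh
end
end

section
/- Let ψ(z) = λ z^n with λ ∈ ℂ \ {0}, n ≥ 1, and φ(z) = a z + b with |a| + |b| < 1 and |a| < |b|. Then D_{ψ,φ,n} is bounded on H²(𝔻) but not posinormal. -/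
open Complex Metric
open scoped InnerProductSpace

noncomputable section

/-!
On a polynomial `p`, `D_{ψ,φ,n}` acts as `p ↦ λ Xⁿ · p⁽ⁿ⁾(aX + b)`; it extends to a bounded
operator on `H²` because the images `λ k⁽ⁿ⁾ zⁿ (az + b)^(k-n)` of the monomials `zᵏ` have norms
at most `|λ| k⁽ⁿ⁾ (|a| + |b|)^(k-n)`, which are summable. Conversely, an operator realizing
`D_{ψ,φ,n}` is determined by the function `z ↦ ψ z · f⁽ⁿ⁾(φ z)` it produces, since an element of
`H²` is determined by its Taylor coefficients at `0`.

Posinormality `T T* = T* P T` gives `‖T* x‖² = ⟪T x, P T x⟫ ≤ ‖P‖ ‖T x‖²`. Let `xⱼ` be the `n`-fold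
antiderivative of `(1 - z/b)ʲ` vanishing to order `n` at `0`. Since `1 - φ(z)/b = -(a/b) z`,
`T xⱼ = λ (-a/b)ʲ z^(n+j)`, which tends to `0` because `|a| < |b|`; but
`⟪zⁿ, T* xⱼ⟫ = ⟪T zⁿ, xⱼ⟫ = ⟪λ n! zⁿ, xⱼ⟫` has modulus `|λ|` for every `j`.
-/

namespace Polynomial

theorem iteratedDeriv_eval {𝕜 : Type*} [NontriviallyNormedField 𝕜] (p : 𝕜[X]) (n : ℕ) :
    iteratedDeriv n (fun z => p.eval z) = fun z => (derivative^[n] p).eval z := by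
  induction n generalizing p with
  | zero => rfl
  | succ n ih =>
    have hderiv : _root_.deriv (fun z => p.eval z) = fun z => (derivative p).eval z := by
      ext z
      exact Polynomial.deriv p
    rw [iteratedDeriv_succ', Function.iterate_succ_apply, hderiv, ih]

def iteratedAntideriv {K : Type*} [Field K] (n : ℕ) (q : K[X]) : K[X] :=
  q.sum fun m c => C (c / (n + m).descFactorial n) * X ^ (n + m)

theorem iterate_derivative_iteratedAntideriv {K : Type*} [Field K] [CharZero K] (n : ℕ)
    (q : K[X]) : derivative^[n] (iteratedAntideriv n q) = q := by
  conv_rhs => rw [← q.sum_C_mul_X_pow_eq]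
  simp only [iteratedAntideriv, Polynomial.sum, iterate_derivative_sum, iterate_derivative_C_mul,
    iterate_derivative_X_pow_eq_C_mul, Nat.add_sub_cancel_left, ← mul_assoc, ← C_mul]
  refine Finset.sum_congr rfl fun m _ => ?_
  rw [div_mul_cancel₀ _ (by simp [Nat.descFactorial_eq_zero_iff_lt])]

theorem factorial_mul_coeff_iteratedAntideriv {K : Type*} [Field K] [CharZero K] (n : ℕ)
    (q : K[X]) : (n.factorial : K) * (iteratedAntideriv n q).coeff n = q.coeff 0 := by
  simpa [Nat.descFactorial_self, nsmul_eq_mul, iterate_derivative_iteratedAntideriv] using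
    (coeff_iterate_derivative (k := n) (iteratedAntideriv n q) 0).symm

end Polynomial

open Polynomial Filter Topology

theorem summable_descFactorial_mul_pow_sub {R : Type*} [NormedRing R] [HasSummableGeomSeries R]
    (j : ℕ) {r : R} (hr : ‖r‖ < 1) :
    Summable fun k : ℕ => (k.descFactorial j : R) * r ^ (k - j) :=
  (summable_nat_add_iff j).mp <| by
    simpa using summable_descFactorial_mul_geometric_of_norm_lt_one j hr

theorem iteratedDeriv_tsum_mul_pow {c : ℕ → ℂ} {M : ℝ} (hc : ∀ k, ‖c k‖ ≤ M) (m : ℕ) {w : ℂ}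
    (hw : w ∈ ball (0 : ℂ) 1) :
    iteratedDeriv m (fun z => ∑' k, c k * z ^ k) w =
      ∑' k, c k * k.descFactorial m * w ^ (k - m) := by
  have hs : IsOpen (ball (0 : ℂ) 1) := isOpen_ball
  have hderiv : ∀ k j, ∀ z ∈ ball (0 : ℂ) 1,
      iteratedDerivWithin j (fun z => c k * z ^ k) (ball 0 1) z
        = c k * k.descFactorial j * z ^ (k - j) := by
    intro k j z hz
    rw [iteratedDerivWithin_const_mul_field, iteratedDerivWithin_pow hz hs.uniqueDiffOn, mul_assoc]
  rw [← iteratedDerivWithin_of_isOpen hs hw, iteratedDerivWithin_tsum m hs hw]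
  · exact tsum_congr fun k => hderiv k m w hw
  · intro z hz
    refine Summable.of_norm_bounded
      ((summable_geometric_of_lt_one (norm_nonneg z) (by simpa using hz)).mul_left M) fun k => ?_
    rw [norm_mul, norm_pow]
    exact mul_le_mul_of_nonneg_right (hc k) (by positivity)
  · intro j _ _
    refine SummableLocallyUniformlyOn_of_locally_bounded hs fun K hK hKc => ?_
    obtain ⟨r, ⟨hr0, hr1⟩, hKr⟩ := exists_pos_lt_subset_ball one_pos hKc.isClosed hK
    refine ⟨fun k => M * (k.descFactorial j * r ^ (k - j)),
      (summable_descFactorial_mul_pow_sub j (by rwa [Real.norm_of_nonneg hr0.le])).mul_left M,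
      fun k z hz => ?_⟩
    have hzr : ‖z‖ ≤ r := by simpa using (mem_ball.mp (hKr hz)).le
    rw [hderiv k j z (hK hz), norm_mul, norm_mul, norm_pow, Complex.norm_natCast, mul_assoc]
    exact mul_le_mul (hc k) (by gcongr) (by positivity) ((norm_nonneg _).trans (hc k))
  · intro k j z _ hz
    refine DifferentiableOn.differentiableAt ?_ (hs.mem_nhds hz)
    exact (by fun_prop : Differentiable ℂ fun z => c k * k.descFactorial j * z ^ (k - j))
      |>.differentiableOn.congr fun z hz => hderiv k j z hz

namespace H2

theorem norm_apply_le (f : H2) (k : ℕ) : ‖f k‖ ≤ ‖f‖ :=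
  lp.norm_apply_le_norm two_ne_zero f k

def evalKernel {z : ℂ} (hz : ‖z‖ < 1) : H2 :=
  ⟨fun k => (starRingEnd ℂ z) ^ k, memℓp_gen <|
    (summable_geometric_of_lt_one (by positivity) (pow_lt_one₀ (norm_nonneg z) hz two_ne_zero))
      |>.congr fun k => by simp [← pow_mul, mul_comm]⟩

theorem inner_evalKernel {z : ℂ} (hz : ‖z‖ < 1) (f : H2) : ⟪evalKernel hz, f⟫_ℂ = f.toFun z := by
  rw [lp.inner_eq_tsum, H2.toFun]
  refine tsum_congr fun k => ?_
  simp [evalKernel, mul_comm]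

theorem iteratedDeriv_toFun (f : H2) (n : ℕ) {w : ℂ} (hw : w ∈ ball (0 : ℂ) 1) :
    iteratedDeriv n f.toFun w = ∑' k, f k * k.descFactorial n * w ^ (k - n) :=
  iteratedDeriv_tsum_mul_pow f.norm_apply_le n hw

theorem iteratedDeriv_toFun_zero (f : H2) (n : ℕ) :
    iteratedDeriv n f.toFun 0 = n.factorial * f n := by
  rw [iteratedDeriv_toFun f n (mem_ball_self one_pos), tsum_eq_single n]
  · simp [Nat.descFactorial_self, mul_comm]
  · intro k hk
    rcases hk.lt_or_gt with hk | hk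
    · simp [Nat.descFactorial_eq_zero_iff_lt.mpr hk]
    · simp [Nat.sub_ne_zero_of_lt hk]

theorem eq_of_eqOn_toFun {f g : H2} (h : Set.EqOn f.toFun g.toFun (ball 0 1)) : f = g := by
  ext n
  have := (h.eventuallyEq_of_mem (ball_mem_nhds 0 one_pos)).iteratedDeriv_eq n
  rw [iteratedDeriv_toFun_zero, iteratedDeriv_toFun_zero] at this
  exact mul_left_cancel₀ (Nat.cast_ne_zero.mpr n.factorial_ne_zero) this

def ofPoly : ℂ[X] →ₗ[ℂ] H2 where
  toFun p := ⟨fun k => p.coeff k, (memℓp_zero <| p.support.finite_toSet.subset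
    fun _ hk => mem_support_iff.mpr hk).of_exponent_ge zero_le⟩
  map_add' p q := by ext k; exact coeff_add p q k
  map_smul' c p := by ext k; exact coeff_smul c p k

theorem ofPoly_apply (p : ℂ[X]) (k : ℕ) : ofPoly p k = p.coeff k := rfl

theorem toFun_ofPoly (p : ℂ[X]) : (ofPoly p).toFun = fun z => p.eval z := by
  funext z
  rw [H2.toFun, eval_eq_sum_range, tsum_eq_sum fun k hk => ?_]
  · rfl
  · rw [ofPoly_apply, coeff_eq_zero_of_natDegree_lt (by simpa using hk), zero_mul]

theorem ofPoly_C_mul_X_pow (c : ℂ) (i : ℕ) : ofPoly (C c * X ^ i) = lp.single 2 i c := by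
  ext k
  rw [ofPoly_apply, coeff_C_mul_X_pow, lp.single_apply, Pi.single_apply]

theorem exists_clm_apply_eq_tsum {E : Type*} [NormedAddCommGroup E] [NormedSpace ℂ E]
    [CompleteSpace E] {v : ℕ → E} (hv : Summable fun k => ‖v k‖) :
    ∃ T : H2 →L[ℂ] E, ∀ f, T f = ∑' k, f k • v k := by
  let A : ℕ → H2 →L[ℂ] E := fun k => (innerSL ℂ (lp.single 2 k (1 : ℂ))).smulRight (v k)
  have hA : Summable A := Summable.of_norm <| hv.congr fun k => by
    simp [A, ContinuousLinearMap.norm_smulRight_apply, innerSL_apply_norm]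
  refine ⟨∑' k, A k, fun f => ?_⟩
  rw [← ContinuousLinearMap.apply_apply (v := f), ContinuousLinearMap.map_tsum _ hA]
  exact tsum_congr fun k => by simp [A, lp.inner_single_left]

theorem norm_ofPoly_C_mul_X_pow_mul_le (c a b : ℂ) (n m : ℕ) :
    ‖ofPoly (C c * X ^ n * (C a * X + C b) ^ m)‖ ≤ ‖c‖ * (‖a‖ + ‖b‖) ^ m := by
  have hexpand : C c * X ^ n * (C a * X + C b) ^ m
      = ∑ i ∈ Finset.range (m + 1), C (c * a ^ i * b ^ (m - i) * m.choose i) * X ^ (n + i) := by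
    rw [add_pow, Finset.mul_sum]
    refine Finset.sum_congr rfl fun i _ => ?_
    simp only [C_mul, C_pow, mul_pow, pow_add, map_natCast]
    ring
  rw [hexpand, map_sum, add_pow, Finset.mul_sum]
  refine (norm_sum_le _ _).trans (Finset.sum_le_sum fun i _ => ?_)
  rw [ofPoly_C_mul_X_pow, lp.norm_single two_pos]
  simp only [norm_mul, norm_pow, Complex.norm_natCast]
  exact le_of_eq (by ring)

end H2

section Posinormal

variable {H : Type*} [NormedAddCommGroup H] [InnerProductSpace ℂ H] [CompleteSpace H]
  {T : H →L[ℂ] H}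

open ContinuousLinearMap in
theorem Posinormal.exists_norm_adjoint_apply_sq_le (hT : Posinormal T) :
    ∃ C, ∀ x, ‖adjoint T x‖ ^ 2 ≤ C * ‖T x‖ ^ 2 := by
  obtain ⟨P, -, hP⟩ := hT
  refine ⟨‖P‖, fun x => ?_⟩
  have hinner : ⟪adjoint T x, adjoint T x⟫_ℂ = ⟪T x, P (T x)⟫_ℂ := by
    rw [adjoint_inner_left, ← comp_apply T (adjoint T), hP]
    exact adjoint_inner_right T x (P (T x))
  calc ‖adjoint T x‖ ^ 2 = RCLike.re ⟪T x, P (T x)⟫_ℂ := by rw [← hinner, inner_self_eq_norm_sq]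
    _ ≤ ‖T x‖ * ‖P (T x)‖ := (RCLike.re_le_norm _).trans (norm_inner_le_norm _ _)
    _ ≤ ‖T x‖ * (‖P‖ * ‖T x‖) := by gcongr; exact P.le_opNorm _
    _ = ‖P‖ * ‖T x‖ ^ 2 := by ring

theorem not_posinormal_of_tendsto {x : ℕ → H} {c : ℝ} (hc : 0 < c)
    (hx : ∀ j, c ≤ ‖ContinuousLinearMap.adjoint T (x j)‖)
    (hTx : Tendsto (fun j => ‖T (x j)‖) atTop (𝓝 0)) : ¬Posinormal T := fun hT => by
  obtain ⟨C, hC⟩ := hT.exists_norm_adjoint_apply_sq_le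
  have hlim : Tendsto (fun j => C * ‖T (x j)‖ ^ 2) atTop (𝓝 0) := by
    simpa using (hTx.pow 2).const_mul C
  have : c ^ 2 ≤ 0 :=
    ge_of_tendsto' hlim fun j => (pow_le_pow_left₀ hc.le (hx j) 2).trans (hC (x j))
  nlinarith

end Posinormal

theorem exists_isWCD (l a b : ℂ) (n : ℕ) (hab : ‖a‖ + ‖b‖ < 1) :
    ∃ T : H2 →L[ℂ] H2, IsWCD (fun z => l * z ^ n) (fun z => a * z + b) n T := by
  let v : ℕ → H2 := fun k =>
    H2.ofPoly (C (l * k.descFactorial n) * X ^ n * (C a * X + C b) ^ (k - n))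
  have hv : Summable fun k => ‖v k‖ := by
    refine Summable.of_nonneg_of_le (fun _ => norm_nonneg _) (fun k => ?_)
      ((summable_descFactorial_mul_pow_sub n (r := ‖a‖ + ‖b‖)
        (by rwa [Real.norm_of_nonneg (by positivity)])).mul_left ‖l‖)
    refine (H2.norm_ofPoly_C_mul_X_pow_mul_le _ _ _ _ _).trans_eq ?_
    simp [mul_assoc]
  obtain ⟨T, hT⟩ := H2.exists_clm_apply_eq_tsum hv
  refine ⟨T, fun f z hz => ?_⟩
  have hz1 : ‖z‖ < 1 := by simpa using hz
  have hw : a * z + b ∈ ball (0 : ℂ) 1 := by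
    rw [mem_ball_zero_iff]
    calc ‖a * z + b‖ ≤ ‖a‖ * ‖z‖ + ‖b‖ := (norm_add_le _ _).trans_eq (by rw [norm_mul])
      _ ≤ ‖a‖ * 1 + ‖b‖ := by gcongr
      _ < 1 := by linarith
  have hsum : Summable fun k => f k • v k :=
    Summable.of_norm_bounded (hv.mul_left ‖f‖) fun k => by
      rw [norm_smul]; gcongr; exact f.norm_apply_le k
  rw [← H2.inner_evalKernel hz1, hT, ← innerSL_apply_apply ℂ, ContinuousLinearMap.map_tsum _ hsum,
    H2.iteratedDeriv_toFun f n hw, ← tsum_mul_left]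
  refine tsum_congr fun k => ?_
  rw [innerSL_apply_apply, inner_smul_right, H2.inner_evalKernel, H2.toFun_ofPoly]
  simp only [eval_mul, eval_C, eval_pow, eval_X, eval_add]
  ring

namespace IsWCD

variable {ψ φ : ℂ → ℂ} {l a b : ℂ} {n : ℕ} {T : H2 →L[ℂ] H2}

theorem apply_eq (hT : IsWCD ψ φ n T) {f g : H2}
    (h : ∀ z ∈ ball (0 : ℂ) 1, g.toFun z = ψ z * iteratedDeriv n f.toFun (φ z)) : T f = g :=
  H2.eq_of_eqOn_toFun fun z hz => (hT f z hz).trans (h z hz).symm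

theorem apply_ofPoly {Ψ Φ : ℂ[X]} (hT : IsWCD (fun z => Ψ.eval z) (fun z => Φ.eval z) n T)
    (p : ℂ[X]) : T (H2.ofPoly p) = H2.ofPoly (Ψ * (derivative^[n] p).comp Φ) :=
  hT.apply_eq fun z _ => by simp [H2.toFun_ofPoly, iteratedDeriv_eval]

theorem apply_ofPoly_of_linear (hT : IsWCD (fun z => l * z ^ n) (fun z => a * z + b) n T)
    (p : ℂ[X]) :
    T (H2.ofPoly p) = H2.ofPoly (C l * X ^ n * (derivative^[n] p).comp (C a * X + C b)) :=
  apply_ofPoly (by simpa using hT) p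

theorem apply_single_self (hT : IsWCD (fun z => l * z ^ n) (fun z => a * z + b) n T) :
    T (lp.single 2 n 1) = lp.single 2 n (l * n.factorial) := by
  rw [← H2.ofPoly_C_mul_X_pow, ← H2.ofPoly_C_mul_X_pow, hT.apply_ofPoly_of_linear, C_1, one_mul,
    iterate_derivative_X_pow_eq_C_mul, Nat.descFactorial_self, Nat.sub_self, pow_zero, mul_one,
    C_comp, C_mul]
  congr 1
  ring

theorem apply_ofPoly_iteratedAntideriv
    (hT : IsWCD (fun z => l * z ^ n) (fun z => a * z + b) n T) (hb : b ≠ 0) (j : ℕ) :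
    T (H2.ofPoly (iteratedAntideriv n ((1 - C b⁻¹ * X) ^ j)))
      = lp.single 2 (n + j) (l * (-(a / b)) ^ j) := by
  have hφ : (1 - C b⁻¹ * X : ℂ[X]).comp (C a * X + C b) = C (-(a / b)) * X := by
    simp only [Polynomial.sub_comp, mul_comp, one_comp, C_comp, X_comp]
    rw [mul_add, ← mul_assoc, ← C_mul, ← C_mul, inv_mul_cancel₀ hb, C_1, div_eq_inv_mul, C_neg]
    ring
  rw [hT.apply_ofPoly_of_linear, iterate_derivative_iteratedAntideriv, pow_comp, hφ,
    ← H2.ofPoly_C_mul_X_pow]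
  congr 1
  simp only [mul_pow, C_mul, C_pow, pow_add]
  ring

open ContinuousLinearMap in
theorem not_posinormal (hl : l ≠ 0) (hab : ‖a‖ < ‖b‖)
    (hT : IsWCD (fun z => l * z ^ n) (fun z => a * z + b) n T) : ¬Posinormal T := by
  have hb0 : 0 < ‖b‖ := (norm_nonneg a).trans_lt hab
  let x : ℕ → H2 := fun j => H2.ofPoly (iteratedAntideriv n ((1 - C b⁻¹ * X) ^ j))
  have hcoeff : ∀ j, (n.factorial : ℂ) * x j n = 1 := fun j => by
    simp [x, H2.ofPoly_apply, factorial_mul_coeff_iteratedAntideriv, coeff_zero_eq_eval_zero]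
  refine not_posinormal_of_tendsto (x := x) (norm_pos_iff.mpr hl) (fun j => ?_) ?_
  · calc ‖l‖ = ‖l‖ * ‖(n.factorial : ℂ) * x j n‖ := by rw [hcoeff j, norm_one, mul_one]
      _ = ‖⟪T (lp.single 2 n 1), x j⟫_ℂ‖ := by
          rw [hT.apply_single_self, lp.inner_single_left]
          simp only [inner, norm_mul, norm_star, Complex.norm_natCast]
          ring
      _ = ‖⟪lp.single 2 n (1 : ℂ), adjoint T (x j)⟫_ℂ‖ := by rw [adjoint_inner_right]
      _ ≤ ‖adjoint T (x j)‖ := by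
          refine (norm_inner_le_norm (𝕜 := ℂ) _ _).trans_eq ?_
          rw [lp.norm_single two_pos, norm_one, one_mul]
  · have hq : ‖a‖ / ‖b‖ < 1 := (div_lt_one hb0).mpr hab
    simpa [x, hT.apply_ofPoly_iteratedAntideriv (norm_pos_iff.mp hb0), lp.norm_single two_pos]
      using (tendsto_pow_atTop_nhds_zero_of_lt_one (by positivity) hq).const_mul ‖l‖

end IsWCD

theorem stmt17_general (a b l : ℂ) (hl : l ≠ 0) (n : ℕ)
    (hab : ‖a‖ + ‖b‖ < 1)
    (hab2 : ‖a‖ < ‖b‖) :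
    ∃ T : H2 →L[ℂ] H2,
      IsWCD (fun z => l * z ^ n) (fun z => a * z + b) n T ∧ ¬ Posinormal T := by
  obtain ⟨T, hT⟩ := exists_isWCD l a b n hab
  exact ⟨T, hT, hT.not_posinormal hl hab2⟩

/-- For `ψ(z) = λ zⁿ` (`λ ≠ 0`) and `φ(z) = a z + b` with `|a| + |b| < 1` and `|a| < |b|`,
`D_{ψ,φ,n}` is bounded on `H²(𝔻)` but not posinormal. -/
theorem stmt17 (a b l : ℂ) (hl : l ≠ 0) (n : ℕ) (hn : 1 ≤ n)
    (hab : ‖a‖ + ‖b‖ < 1)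
    (hab2 : ‖a‖ < ‖b‖) :
    ∃ T : H2 →L[ℂ] H2,
      IsWCD (fun z => l * z ^ n) (fun z => a * z + b) n T ∧ ¬ Posinormal T :=
  stmt17_general a b l hl n hab hab2
end
end
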